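/- arXiv:2011.13884 — 8 statements merged into one kernel-verified Lean document; each statement's English description precedes it below -/
import Mathlib

section
/- Let z ∈ (0,1) and define g(t) = √(t(1−t))·z/t for t ∈ [z,1]. Then for t ∈ (z, min(2z,1)) one has g(z) − g(t) ≥ (t−z)/(4√(2z)), and for t ∈ [min(2z,1), 1] one has g(z) − g(t) ≥ √(z(1−z))/4. -/
/-!
Write `A = g z` and `B = g t`. Since `g t ^ 2 * t = z ^ 2 * (1 - t)`, one gets
`A ^ 2 - B ^ 2 = z (t - z) / t`, hence `A - B = z (t - z) / (t (A + B))`. For `t < 2 z` the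
denominator is at most `2 z · 2 √(2 z)`, which gives the linear bound. For `t ≥ min (2 z) 1` the
same identity gives `2 B ^ 2 ≤ A ^ 2`, so `B ≤ 3 A / 4`.
-/

open Real

noncomputable def profile (z t : ℝ) : ℝ := √(t * (1 - t)) * z / t

section
variable {z t : ℝ}

lemma profile_self (hz : z ≠ 0) : profile z z = √(z * (1 - z)) :=
  mul_div_cancel_right₀ _ hz

lemma profile_nonneg (hz : 0 ≤ z) (ht : 0 ≤ t) : 0 ≤ profile z t := by
  unfold profile; positivity

lemma sq_profile_mul_self (ht0 : 0 < t) (ht1 : t ≤ 1) :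
    profile z t ^ 2 * t = z ^ 2 * (1 - t) := by
  rw [profile, div_pow, mul_pow, sq_sqrt (by nlinarith)]
  field_simp

lemma sq_profile_self_sub_sq_profile (hz : 0 < z) (hz1 : z ≤ 1) (ht0 : 0 < t) (ht1 : t ≤ 1) :
    profile z z ^ 2 - profile z t ^ 2 = z * (t - z) / t := by
  have hA := sq_profile_mul_self (z := z) hz hz1
  have hB := sq_profile_mul_self (z := z) ht0 ht1
  field_simp
  nlinarith

lemma profile_le_profile_self (hz : 0 < z) (hzt : z ≤ t) (ht1 : t ≤ 1) :
    profile z t ≤ profile z z := by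
  have hd := sq_profile_self_sub_sq_profile hz (hzt.trans ht1) (hz.trans_le hzt) ht1
  have : 0 ≤ z * (t - z) / t := by
    have := hz.trans_le hzt
    have : 0 ≤ t - z := by linarith
    positivity
  exact pow_le_pow_iff_left₀ (profile_nonneg hz.le (hz.le.trans hzt))
    (profile_nonneg hz.le hz.le) two_ne_zero |>.mp (by linarith)

lemma profile_self_le_sqrt_two_mul (hz : 0 < z) : profile z z ≤ √(2 * z) := by
  rw [profile_self hz.ne']
  exact sqrt_le_sqrt (by nlinarith)

lemma div_le_profile_self_sub_profile (hz : 0 < z) (hzt : z < t) (ht2z : t < 2 * z)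
    (ht1 : t < 1) :
    (t - z) / (4 * √(2 * z)) ≤ profile z z - profile z t := by
  have ht0 : 0 < t := hz.trans hzt
  have hA : 0 < profile z z := by
    rw [profile_self hz.ne']; exact sqrt_pos.2 (by nlinarith)
  have hB := profile_nonneg hz.le ht0.le
  have hBA := profile_le_profile_self hz hzt.le ht1.le
  have hAw := profile_self_le_sqrt_two_mul hz
  have hsum : t * (profile z z + profile z t) ≤ 2 * z * (2 * √(2 * z)) := by
    gcongr
    linarith
  calc (t - z) / (4 * √(2 * z)) = z * (t - z) / (2 * z * (2 * √(2 * z))) := by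
        field_simp; ring
    _ ≤ z * (t - z) / (t * (profile z z + profile z t)) := by
        gcongr
    _ = (profile z z ^ 2 - profile z t ^ 2) / (profile z z + profile z t) := by
        rw [sq_profile_self_sub_sq_profile hz (hzt.trans ht1).le ht0 ht1.le, div_div]
    _ = profile z z - profile z t := by
        field_simp; ring

lemma two_mul_sq_profile_le (hz : 0 < z) (hz1 : z < 1) (ht0 : 0 < t) (ht1 : t ≤ 1)
    (h : 2 * z ≤ t * (1 + z)) : 2 * profile z t ^ 2 ≤ profile z z ^ 2 := by
  rw [profile_self hz.ne', sq_sqrt (by nlinarith)]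
  have hB := sq_profile_mul_self (z := z) ht0 ht1
  nlinarith

lemma profile_self_div_four_le (hz : 0 < z) (hz1 : z < 1) (ht0 : 0 < t) (ht1 : t ≤ 1)
    (h : 2 * z ≤ t * (1 + z)) : profile z z / 4 ≤ profile z z - profile z t := by
  have hsq := two_mul_sq_profile_le hz hz1 ht0 ht1 h
  have hA := profile_nonneg (z := z) hz.le hz.le
  have hB := profile_nonneg (z := z) hz.le ht0.le
  nlinarith

end

/-- Lemma on the function `g(t) = √(t(1-t)) · z / t` for `z ∈ (0,1)`:
for `t ∈ (z, min(2z,1))`, `g z - g t ≥ (t-z)/(4√(2z))`, and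
for `t ∈ [min(2z,1), 1]`, `g z - g t ≥ √(z(1-z))/4`. -/
theorem stmt_0 (z : ℝ) (hz : 0 < z) (hz1 : z < 1)
    (g : ℝ → ℝ) (hg : ∀ t, g t = Real.sqrt (t * (1 - t)) * z / t) :
    (∀ t, z < t → t < min (2 * z) 1 →
      (t - z) / (4 * Real.sqrt (2 * z)) ≤ g z - g t) ∧
    (∀ t, min (2 * z) 1 ≤ t → t ≤ 1 →
      Real.sqrt (z * (1 - z)) / 4 ≤ g z - g t) := by
  obtain rfl : g = profile z := funext hg
  refine ⟨fun t hzt ht => ?_, fun t ht ht1 => ?_⟩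
  · rw [lt_min_iff] at ht
    exact div_le_profile_self_sub_profile hz hzt ht.1 ht.2
  · rw [← profile_self hz.ne']
    have ht0 : 0 < t := lt_of_lt_of_le (lt_min (by linarith) one_pos) ht
    refine profile_self_div_four_le hz hz1 ht0 ht1 ?_
    rcases min_le_iff.mp ht with h | h <;> nlinarith
end

section
/- For real numbers z, t with 0 < z ≤ t ≤ 1, one has 1 − √(z(1−t)/(t(1−z))) ≥ (t−z)/(2t). -/
/-- For reals `0 < z ≤ t ≤ 1`, `1 - √(z(1-t)/(t(1-z))) ≥ (t-z)/(2t)`. -/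
theorem stmt_1 (z t : ℝ) (hz : 0 < z) (hzt : z ≤ t) (ht : t ≤ 1) :
    (t - z) / (2 * t) ≤ 1 - Real.sqrt (z * (1 - t) / (t * (1 - z))) := by
  have ht0 : 0 < t := lt_of_lt_of_le hz hzt
  have hsum : (t - z) / (2 * t) + (t + z) / (2 * t) = 1 := by
    field_simp; ring
  have key : Real.sqrt (z * (1 - t) / (t * (1 - z))) ≤ (t + z) / (2 * t) := by
    by_cases hz1 : z = 1
    · have ht1 : t = 1 := le_antisymm ht (hz1 ▸ hzt)
      simp [hz1, ht1]
    · have hz1' : (0:ℝ) < 1 - z := by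
        rcases lt_or_eq_of_le (hzt.trans ht) with h | h
        · linarith
        · exact absurd h hz1
      have hle : z * (1 - t) / (t * (1 - z)) ≤ ((t + z) / (2 * t)) ^ 2 := by
        rw [div_pow, div_le_div_iff₀ (by positivity) (by positivity)]
        nlinarith [sq_nonneg (t - z), mul_nonneg (mul_nonneg hz.le (sub_nonneg.2 hzt)) (mul_pos ht0 hz1').le, mul_nonneg (mul_nonneg hz.le (sub_nonneg.2 hzt)) (mul_pos ht0 ht0).le]
      calc Real.sqrt (z * (1 - t) / (t * (1 - z))) ≤ Real.sqrt (((t + z) / (2 * t)) ^ 2) :=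
            Real.sqrt_le_sqrt hle
        _ = (t + z) / (2 * t) := Real.sqrt_sq (by positivity)
  linarith
end

section
/- Let 0 = c₀ < c₁ < ... < c_m < c_{m+1} = n be integers, let R be the n × (m+1) real matrix whose (t, j+1) entry is the indicator of c_j + 1 ≤ t ≤ c_{j+1}, and for a fixed index 1 ≤ j ≤ m let R_{−j} be the n × m matrix obtained from R by replacing columns j and j+1 by their sum. Then for any vector U ∈ ℝⁿ, ‖(I − Π_{R_{−j}})U‖² − ‖(I − Π_R)U‖² equals the square of the CUSUM statistic C(U) = √((c_{j+1}−c_j)(c_j−c_{j−1})/(c_{j+1}−c_{j−1})) · ( (1/(c_j−c_{j−1})) Σ_{t=c_{j−1}+1}^{c_j} U_t − (1/(c_{j+1}−c_j)) Σ_{t=c_j+1}^{c_{j+1}} U_t ). -/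
open Matrix Finset

/-! The columns of a segment-indicator matrix are pairwise orthogonal with squared norms the
segment lengths, so `Uᵀ Π_A U = Σ_k (Σ_{t ∈ segment k} U_t)² / |segment k|` and the residual sum
of squares is `‖U‖²` minus this sum. Merging two adjacent segments replaces two terms of the sum
by one, and for segment sums `x, y` over lengths `p, q`,
`x²/p + y²/q - (x+y)²/(p+q) = (q p / (p+q)) (x/p - y/q)²`. -/

/-- Orthogonal projection matrix onto the column space of `A`. -/
noncomputable def projMat {n m : ℕ} (A : Matrix (Fin n) (Fin m) ℝ) :
    Matrix (Fin n) (Fin n) ℝ :=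
  A * (Aᵀ * A)⁻¹ * Aᵀ

section Projection

variable {ι : Type*} [Fintype ι] [DecidableEq ι]

lemma one_sub_mulVec_dotProduct_self {P : Matrix ι ι ℝ} (hsymm : Pᵀ = P)
    (hidem : IsIdempotentElem P) (U : ι → ℝ) :
    ((1 - P) *ᵥ U) ⬝ᵥ ((1 - P) *ᵥ U) = U ⬝ᵥ U - U ⬝ᵥ P *ᵥ U := by
  have hPP : (P *ᵥ U) ⬝ᵥ (P *ᵥ U) = U ⬝ᵥ P *ᵥ U := calc
    (P *ᵥ U) ⬝ᵥ (P *ᵥ U) = U ⬝ᵥ (Pᵀ * P) *ᵥ U := by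
      rw [← mulVec_mulVec, dotProduct_mulVec U, vecMul_transpose]
    _ = U ⬝ᵥ P *ᵥ U := by rw [hsymm, hidem.eq]
  simp only [sub_mulVec, one_mulVec, sub_dotProduct, dotProduct_sub, hPP,
    dotProduct_comm (P *ᵥ U) U]
  ring

variable {n m : ℕ}

lemma projMat_transpose (A : Matrix (Fin n) (Fin m) ℝ) : (projMat A)ᵀ = projMat A := by
  rw [projMat, transpose_mul, transpose_mul, transpose_transpose, transpose_nonsing_inv,
    transpose_mul, transpose_transpose, Matrix.mul_assoc]

lemma isIdempotentElem_projMat {A : Matrix (Fin n) (Fin m) ℝ} (hA : IsUnit (Aᵀ * A).det) :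
    IsIdempotentElem (projMat A) := by
  calc projMat A * projMat A = A * ((Aᵀ * A)⁻¹ * (Aᵀ * A)) * (Aᵀ * A)⁻¹ * Aᵀ := by
        simp only [projMat, Matrix.mul_assoc]
    _ = projMat A := by rw [nonsing_inv_mul _ hA, Matrix.mul_one, projMat]

lemma dotProduct_projMat_mulVec_of_transpose_mul_self_eq_diagonal
    {A : Matrix (Fin n) (Fin m) ℝ} {d : Fin m → ℝ} (hA : Aᵀ * A = diagonal d)
    (hd : ∀ k, d k ≠ 0) (U : Fin n → ℝ) :
    U ⬝ᵥ projMat A *ᵥ U = ∑ k, (Aᵀ *ᵥ U) k ^ 2 / d k := by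
  have hinv : (Aᵀ * A)⁻¹ = diagonal d⁻¹ := by
    rw [hA]
    refine inv_eq_right_inv ?_
    rw [diagonal_mul_diagonal, ← diagonal_one]
    exact congrArg diagonal (funext fun k => mul_inv_cancel₀ (hd k))
  rw [projMat, hinv, ← mulVec_mulVec, ← mulVec_mulVec, dotProduct_mulVec,
    ← mulVec_transpose]
  simp only [dotProduct, mulVec_diagonal, Pi.inv_apply]
  refine sum_congr rfl fun k _ => ?_
  ring

end Projection

def icoIndicator (n a b : ℕ) : Fin n → ℝ := fun t => if (t : ℕ) ∈ Ico a b then 1 else 0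

section Indicator

variable {n : ℕ}

lemma icoIndicator_dotProduct_self {a b : ℕ} (hab : a ≤ b) (hb : b ≤ n) :
    icoIndicator n a b ⬝ᵥ icoIndicator n a b = (b : ℝ) - a := by
  have hfilter : (range n).filter (· ∈ Ico a b) = Ico a b := by
    ext t
    simp only [mem_filter, mem_range, mem_Ico]
    omega
  simp only [dotProduct, icoIndicator, ite_zero_mul_ite_zero, and_self, mul_one]
  rw [Fin.sum_univ_eq_sum_range (fun t => if t ∈ Ico a b then (1 : ℝ) else 0), sum_boole,
    hfilter, Nat.card_Ico, Nat.cast_sub hab]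

lemma icoIndicator_dotProduct_eq_zero {a b a' b' : ℕ} (h : b ≤ a') :
    icoIndicator n a b ⬝ᵥ icoIndicator n a' b' = 0 := by
  refine sum_eq_zero fun t _ => ?_
  simp only [icoIndicator, mem_Ico]
  split_ifs <;> first | (exfalso; omega) | norm_num

lemma icoIndicator_add {a b c : ℕ} (hab : a ≤ b) (hbc : b ≤ c) :
    icoIndicator n a b + icoIndicator n b c = icoIndicator n a c := by
  funext t
  simp only [Pi.add_apply, icoIndicator, mem_Ico]
  split_ifs <;> first | (exfalso; omega) | norm_num

end Indicator

def segmentMatrix (n M : ℕ) (e : ℕ → ℕ) : Matrix (Fin n) (Fin M) ℝ :=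
  of fun t k => icoIndicator n (e k) (e ((k : ℕ) + 1)) t

lemma segmentMatrix_transpose_mul_self {n M : ℕ} {e : ℕ → ℕ}
    (he : StrictMonoOn e (Set.Iic M)) (hn : e M ≤ n) :
    (segmentMatrix n M e)ᵀ * segmentMatrix n M e =
      diagonal fun k : Fin M => (e ((k : ℕ) + 1) : ℝ) - e k := by
  have hle {k l : ℕ} (hkl : k ≤ l) (hl : l ≤ M) : e k ≤ e l :=
    he.monotoneOn (Set.mem_Iic.2 (hkl.trans hl)) (Set.mem_Iic.2 hl) hkl
  ext k l
  change icoIndicator n (e k) (e (k + 1)) ⬝ᵥ icoIndicator n (e l) (e (l + 1)) = _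
  rcases lt_trichotomy k l with hkl | rfl | hkl
  · rw [diagonal_apply_ne _ hkl.ne, icoIndicator_dotProduct_eq_zero (hle hkl l.is_lt.le)]
  · rw [diagonal_apply_eq, icoIndicator_dotProduct_self (hle k.val.le_succ k.is_lt)
      ((hle k.is_lt le_rfl).trans hn)]
  · rw [diagonal_apply_ne _ hkl.ne', dotProduct_comm,
      icoIndicator_dotProduct_eq_zero (hle hkl k.is_lt.le)]

noncomputable def rss {n m : ℕ} (A : Matrix (Fin n) (Fin m) ℝ) (U : Fin n → ℝ) : ℝ :=
  ((1 - projMat A) *ᵥ U) ⬝ᵥ ((1 - projMat A) *ᵥ U)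

lemma rss_segmentMatrix {n M : ℕ} {e : ℕ → ℕ} (he : StrictMonoOn e (Set.Iic M)) (hn : e M ≤ n)
    (U : Fin n → ℝ) :
    rss (segmentMatrix n M e) U =
      U ⬝ᵥ U - ∑ k ∈ range M, (icoIndicator n (e k) (e (k + 1)) ⬝ᵥ U) ^ 2 /
        ((e (k + 1) : ℝ) - e k) := by
  have hgram := segmentMatrix_transpose_mul_self he hn
  have hpos (k : Fin M) : (0 : ℝ) < e ((k : ℕ) + 1) - e k :=
    sub_pos.2 (Nat.cast_lt.2 (he (Set.mem_Iic.2 k.is_lt.le) (Set.mem_Iic.2 k.is_lt)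
      k.val.lt_succ_self))
  have hdet : IsUnit ((segmentMatrix n M e)ᵀ * segmentMatrix n M e).det := by
    simp [hgram, isUnit_iff_ne_zero, (hpos _).ne', prod_ne_zero_iff]
  rw [rss, one_sub_mulVec_dotProduct_self (projMat_transpose _) (isIdempotentElem_projMat hdet),
    dotProduct_projMat_mulVec_of_transpose_mul_self_eq_diagonal hgram (fun k => (hpos k).ne'),
    ← Fin.sum_univ_eq_sum_range (fun k => (icoIndicator n (e k) (e (k + 1)) ⬝ᵥ U) ^ 2 /
        ((e (k + 1) : ℝ) - e k))]
  rfl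

lemma sum_range_succ_sub_sum_range_of_merge {G : Type*} [AddCommGroup G] {f g : ℕ → G}
    {i m : ℕ} (him : i < m) (hlo : ∀ k < i, g k = f k) (hhi : ∀ k, i < k → g k = f (k + 1)) :
    ∑ k ∈ range (m + 1), f k - ∑ k ∈ range m, g k = f i + f (i + 1) - g i := by
  induction m, him using Nat.le_induction with
  | base =>
    rw [sum_range_succ, sum_range_succ, sum_range_succ g,
      sum_congr rfl fun k hk => hlo k (mem_range.1 hk)]
    abel
  | succ m hm ih =>
    rw [sum_range_succ, sum_range_succ g, hhi m hm, ← ih]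
    abel

lemma sq_div_add_sq_div_sub_sq_div_add {p q : ℝ} (hp : 0 < p) (hq : 0 < q) (x y : ℝ) :
    x ^ 2 / p + y ^ 2 / q - (x + y) ^ 2 / (p + q) = (√(q * p / (p + q)) * (x / p - y / q)) ^ 2 := by
  rw [mul_pow, Real.sq_sqrt (by positivity)]
  field_simp
  ring

lemma rss_segmentMatrix_erase_sub_rss_segmentMatrix {n m i : ℕ} {c : ℕ → ℕ}
    (hc : StrictMonoOn c (Set.Iic (m + 1))) (hn : c (m + 1) ≤ n) (him : i < m) (U : Fin n → ℝ) :
    rss (segmentMatrix n m (c ∘ fun k => if k ≤ i then k else k + 1)) U -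
        rss (segmentMatrix n (m + 1) c) U =
      (√(((c (i + 2) : ℝ) - c (i + 1)) * ((c (i + 1) : ℝ) - c i) / ((c (i + 2) : ℝ) - c i)) *
        (icoIndicator n (c i) (c (i + 1)) ⬝ᵥ U / ((c (i + 1) : ℝ) - c i) -
          icoIndicator n (c (i + 1)) (c (i + 2)) ⬝ᵥ U / ((c (i + 2) : ℝ) - c (i + 1)))) ^ 2 := by
  set b := c ∘ fun k => if k ≤ i then k else k + 1
  have hb : StrictMonoOn b (Set.Iic m) := by
    refine hc.comp (fun x _ y _ hxy => ?_) fun x hx => ?_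
    · split_ifs <;> omega
    · simp only [Set.mem_Iic] at hx ⊢
      split_ifs <;> omega
  have hb_lo (k : ℕ) (hk : k ≤ i) : b k = c k := congrArg c (if_pos hk)
  have hb_hi (k : ℕ) (hk : i < k) : b k = c (k + 1) := congrArg c (if_neg (by omega))
  have hlt (k : ℕ) (hk : k ≤ m) : c k < c (k + 1) :=
    hc (Set.mem_Iic.2 (by omega)) (Set.mem_Iic.2 (by omega)) k.lt_succ_self
  rw [rss_segmentMatrix hb ((hb_hi m him).trans_le hn), rss_segmentMatrix hc hn,
    sub_sub_sub_cancel_left,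
    sum_range_succ_sub_sum_range_of_merge him
      (fun k hk => by rw [hb_lo k hk.le, hb_lo (k + 1) hk])
      (fun k hk => by rw [hb_hi k hk, hb_hi (k + 1) (by omega)]),
    hb_lo i le_rfl, hb_hi (i + 1) i.lt_succ_self,
    ← icoIndicator_add (hlt i him.le).le (hlt (i + 1) him).le, add_dotProduct,
    show ((c (i + 1 + 1) : ℝ) - c i) = (c (i + 1) - c i) + (c (i + 1 + 1) - c (i + 1)) by ring,
    ← sq_div_add_sq_div_sub_sq_div_add (sub_pos.2 (Nat.cast_lt.2 (hlt i him.le)))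
      (sub_pos.2 (Nat.cast_lt.2 (hlt (i + 1) him)))]

theorem stmt_2_general (n m : ℕ) (c : ℕ → ℕ) (hclast : c (m + 1) = n)
    (hcmono : ∀ k ≤ m, c k < c (k + 1))
    (j : ℕ) (hj1 : 1 ≤ j) (hjm : j ≤ m)
    (ind : ℕ → ℕ → Fin n → ℝ)
    (hind : ∀ a b (t : Fin n), ind a b t =
      if a < (t : ℕ) + 1 ∧ (t : ℕ) + 1 ≤ b then 1 else 0)
    (R : Matrix (Fin n) (Fin (m + 1)) ℝ)
    (hR : ∀ (t : Fin n) (k : Fin (m + 1)), R t k = ind (c k) (c (k + 1)) t)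
    (Rm : Matrix (Fin n) (Fin m) ℝ)
    (hRm : ∀ (t : Fin n) (k : Fin m), Rm t k =
      if (k : ℕ) + 1 < j then ind (c k) (c ((k : ℕ) + 1)) t
      else if (k : ℕ) + 1 = j then ind (c (j - 1)) (c (j + 1)) t
      else ind (c ((k : ℕ) + 1)) (c ((k : ℕ) + 2)) t)
    (U : Fin n → ℝ) :
    ((1 - projMat Rm) *ᵥ U) ⬝ᵥ ((1 - projMat Rm) *ᵥ U) -
        ((1 - projMat R) *ᵥ U) ⬝ᵥ ((1 - projMat R) *ᵥ U) =
      (Real.sqrt (((c (j + 1) : ℝ) - c j) * ((c j : ℝ) - c (j - 1)) /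
            ((c (j + 1) : ℝ) - c (j - 1))) *
          ((ind (c (j - 1)) (c j) ⬝ᵥ U) / ((c j : ℝ) - c (j - 1)) -
            (ind (c j) (c (j + 1)) ⬝ᵥ U) / ((c (j + 1) : ℝ) - c j))) ^ 2 := by
  obtain rfl : ind = icoIndicator n := by
    funext a b t
    simp only [hind, icoIndicator, mem_Ico]
    congr 1
    exact propext (by omega)
  obtain ⟨i, rfl⟩ : ∃ i, j = i + 1 := ⟨j - 1, by omega⟩
  obtain rfl : R = segmentMatrix n (m + 1) c := by
    ext t k
    exact hR t k
  obtain rfl : Rm = segmentMatrix n m (c ∘ fun k => if k ≤ i then k else k + 1) := by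
    ext t k
    simp only [hRm, segmentMatrix, of_apply, Function.comp_apply]
    split_ifs <;> first | rfl | (congr 2 <;> omega)
  exact rss_segmentMatrix_erase_sub_rss_segmentMatrix
    (strictMonoOn_Iic_of_lt_succ fun k hk => hcmono k (Nat.lt_succ_iff.1 hk)) hclast.le hjm U

/-- Merging two adjacent columns of the segment-indicator design matrix
increases the residual sum of squares by exactly the squared CUSUM statistic. -/
theorem stmt_2 (n m : ℕ) (c : ℕ → ℕ) (hc0 : c 0 = 0) (hclast : c (m + 1) = n)
    (hcmono : ∀ k ≤ m, c k < c (k + 1))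
    (j : ℕ) (hj1 : 1 ≤ j) (hjm : j ≤ m)
    (ind : ℕ → ℕ → Fin n → ℝ)
    (hind : ∀ a b (t : Fin n), ind a b t =
      if a < (t : ℕ) + 1 ∧ (t : ℕ) + 1 ≤ b then 1 else 0)
    (R : Matrix (Fin n) (Fin (m + 1)) ℝ)
    (hR : ∀ (t : Fin n) (k : Fin (m + 1)), R t k = ind (c k) (c (k + 1)) t)
    (Rm : Matrix (Fin n) (Fin m) ℝ)
    (hRm : ∀ (t : Fin n) (k : Fin m), Rm t k =
      if (k : ℕ) + 1 < j then ind (c k) (c ((k : ℕ) + 1)) t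
      else if (k : ℕ) + 1 = j then ind (c (j - 1)) (c (j + 1)) t
      else ind (c ((k : ℕ) + 1)) (c ((k : ℕ) + 2)) t)
    (U : Fin n → ℝ) :
    ((1 - projMat Rm) *ᵥ U) ⬝ᵥ ((1 - projMat Rm) *ᵥ U) -
        ((1 - projMat R) *ᵥ U) ⬝ᵥ ((1 - projMat R) *ᵥ U) =
      (Real.sqrt (((c (j + 1) : ℝ) - c j) * ((c j : ℝ) - c (j - 1)) /
            ((c (j + 1) : ℝ) - c (j - 1))) *
          ((ind (c (j - 1)) (c j) ⬝ᵥ U) / ((c j : ℝ) - c (j - 1)) -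
            (ind (c j) (c (j + 1)) ⬝ᵥ U) / ((c (j + 1) : ℝ) - c j))) ^ 2 :=
  stmt_2_general n m c hclast hcmono j hj1 hjm ind hind R hR Rm hRm U
end

section
/- With R and R_{−j} as above and R_j denoting the (j+1)-th column of R, one has R_jᵀ(I − Π_{R_{−j}})R_j = (c_j − c_{j−1})(c_{j+1} − c_j)/(c_{j+1} − c_{j−1}). -/
/-!
The columns of `R_{-j}` are indicators of consecutive disjoint segments, so its Gram matrix is
diagonal with the segment lengths on the diagonal, and `vᵀ Π_{R_{-j}} v` is the sum of the
squared inner products of `v` with the columns, each divided by the length of its segment.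
The column `R_j` lies inside the merged segment `(c_{j-1}, c_{j+1}]` and is orthogonal to every
other column, so with `L = c_{j+1} - c_j` and `D = c_{j+1} - c_{j-1}` the quantity is
`‖R_j‖² - L² / D = L - L² / D = L (D - L) / D`.
-/

open Matrix

theorem inv_diagonal_of_ne_zero {m : ℕ} {d : Fin m → ℝ} (hd : ∀ k, d k ≠ 0) :
    (diagonal d)⁻¹ = diagonal d⁻¹ :=
  inv_eq_right_inv <| by
    rw [diagonal_mul_diagonal, ← diagonal_one]
    exact congrArg diagonal (funext fun k => mul_inv_cancel₀ (hd k))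

theorem dotProduct_projMat_mulVec_of_gram_eq_diagonal {n m : ℕ} {A : Matrix (Fin n) (Fin m) ℝ}
    {d : Fin m → ℝ} (hd : ∀ k, d k ≠ 0) (hA : Aᵀ * A = diagonal d) (v : Fin n → ℝ) :
    v ⬝ᵥ (projMat A *ᵥ v) = ∑ k, (Aᵀ *ᵥ v) k ^ 2 / d k := by
  rw [projMat, hA, inv_diagonal_of_ne_zero hd, ← mulVec_mulVec, ← mulVec_mulVec,
    dotProduct_mulVec, ← mulVec_transpose, dotProduct]
  refine Finset.sum_congr rfl fun k _ => ?_
  rw [mulVec_diagonal, Pi.inv_apply]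
  ring

/-- The indicator of `{t | a ≤ t < b}`, written with the one-based index `t + 1 ∈ (a, b]`. -/
def intervalIndicator (n a b : ℕ) : Fin n → ℝ :=
  fun t => if a < (t : ℕ) + 1 ∧ (t : ℕ) + 1 ≤ b then 1 else 0

theorem intervalIndicator_dotProduct_of_le {n a b a' b' : ℕ} (ha : a' ≤ a) (hb : b ≤ b')
    (hbn : b ≤ n) :
    intervalIndicator n a b ⬝ᵥ intervalIndicator n a' b' = ((b - a : ℕ) : ℝ) := by
  have hfilter : (Finset.range n).filter (fun t => a < t + 1 ∧ t + 1 ≤ b) = Finset.Ico a b := by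
    ext t
    simp only [Finset.mem_filter, Finset.mem_range, Finset.mem_Ico]
    omega
  rw [← Nat.card_Ico, ← hfilter, ← Finset.sum_boole, dotProduct,
    ← Fin.sum_univ_eq_sum_range (fun t => if a < t + 1 ∧ t + 1 ≤ b then (1 : ℝ) else 0)]
  refine Finset.sum_congr rfl fun t _ => ?_
  simp only [intervalIndicator]
  split_ifs <;> first | omega | simp

theorem intervalIndicator_dotProduct_eq_zero {n a b a' b' : ℕ} (h : b ≤ a') :
    intervalIndicator n a b ⬝ᵥ intervalIndicator n a' b' = 0 := by
  refine Finset.sum_eq_zero fun t _ => ?_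
  simp only [intervalIndicator]
  split_ifs <;> first | omega | simp

section Segments

variable {n m : ℕ} {p : ℕ → ℕ} {A : Matrix (Fin n) (Fin m) ℝ}

theorem transpose_mul_self_of_segments (hp : MonotoneOn p (Set.Iic m)) (hpn : p m ≤ n)
    (hA : ∀ t k, A t k = intervalIndicator n (p k) (p ((k : ℕ) + 1)) t) :
    Aᵀ * A = diagonal fun k : Fin m => ((p ((k : ℕ) + 1) - p k : ℕ) : ℝ) := by
  have hsep : ∀ k l : Fin m, k < l → p ((k : ℕ) + 1) ≤ p l := fun k l hkl =>
    hp (by simp) (by simp) (Fin.lt_def.mp hkl)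
  ext k l
  have hkl : (Aᵀ * A) k l = intervalIndicator n (p k) (p ((k : ℕ) + 1)) ⬝ᵥ
      intervalIndicator n (p l) (p ((l : ℕ) + 1)) := by
    simp only [mul_apply, dotProduct, transpose_apply, hA]
  rw [hkl]
  rcases lt_trichotomy k l with h | rfl | h
  · rw [diagonal_apply_ne _ h.ne, intervalIndicator_dotProduct_eq_zero (hsep k l h)]
  · rw [diagonal_apply_eq, intervalIndicator_dotProduct_of_le le_rfl le_rfl
      ((hp (by simp) (by simp) (by omega)).trans hpn)]
  · rw [diagonal_apply_ne _ h.ne', dotProduct_comm,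
      intervalIndicator_dotProduct_eq_zero (hsep l k h)]

theorem transpose_mulVec_intervalIndicator_of_le (hp : MonotoneOn p (Set.Iic m))
    (k₀ : Fin m) {a b : ℕ} (ha : p k₀ ≤ a) (hb : b ≤ p ((k₀ : ℕ) + 1)) (hbn : b ≤ n)
    (hA : ∀ t k, A t k = intervalIndicator n (p k) (p ((k : ℕ) + 1)) t) :
    Aᵀ *ᵥ intervalIndicator n a b = Pi.single k₀ ((b - a : ℕ) : ℝ) := by
  ext k
  have hk : (Aᵀ *ᵥ intervalIndicator n a b) k =
      intervalIndicator n a b ⬝ᵥ intervalIndicator n (p k) (p ((k : ℕ) + 1)) := by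
    simp only [mulVec, dotProduct, transpose_apply, hA, mul_comm]
  rw [hk]
  rcases lt_trichotomy k k₀ with h | rfl | h
  · rw [Pi.single_eq_of_ne h.ne, dotProduct_comm, intervalIndicator_dotProduct_eq_zero
      ((hp (by simp) (by simp) (Fin.lt_def.mp h)).trans ha)]
  · rw [Pi.single_eq_same, intervalIndicator_dotProduct_of_le ha hb hbn]
  · rw [Pi.single_eq_of_ne h.ne', intervalIndicator_dotProduct_eq_zero
      (hb.trans (hp (by simp) (by simp) (Fin.lt_def.mp h)))]

theorem intervalIndicator_dotProduct_projMat_mulVec_of_segments (hp : StrictMonoOn p (Set.Iic m))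
    (hpn : p m ≤ n) (hA : ∀ t k, A t k = intervalIndicator n (p k) (p ((k : ℕ) + 1)) t)
    (k₀ : Fin m) {a b : ℕ} (ha : p k₀ ≤ a) (hb : b ≤ p ((k₀ : ℕ) + 1)) :
    intervalIndicator n a b ⬝ᵥ (projMat A *ᵥ intervalIndicator n a b) =
      ((b - a : ℕ) : ℝ) ^ 2 / ((p ((k₀ : ℕ) + 1) - p k₀ : ℕ) : ℝ) := by
  have hlen : ∀ k : Fin m, ((p ((k : ℕ) + 1) - p k : ℕ) : ℝ) ≠ 0 := fun k => by
    have := hp (by simp) (by simp) (Nat.lt_succ_self k)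
    exact_mod_cast (Nat.sub_pos_of_lt this).ne'
  have hbn : b ≤ n := hb.trans ((hp.monotoneOn (by simp) (by simp) (by omega)).trans hpn)
  rw [dotProduct_projMat_mulVec_of_gram_eq_diagonal hlen
      (transpose_mul_self_of_segments hp.monotoneOn hpn hA),
    transpose_mulVec_intervalIndicator_of_le hp.monotoneOn k₀ ha hb hbn hA,
    Fintype.sum_eq_single k₀ fun k hk => by rw [Pi.single_eq_of_ne hk]; simp]
  simp only [Pi.single_eq_same]

end Segments

/-- Removing the breakpoint `c j` merges `(c (j-1), c j]` and `(c j, c (j+1)]` into one segment. -/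
def eraseBreakpoint (c : ℕ → ℕ) (j : ℕ) : ℕ → ℕ :=
  fun k => c (if k < j then k else k + 1)

theorem eraseBreakpoint_of_lt {c : ℕ → ℕ} {j k : ℕ} (h : k < j) : eraseBreakpoint c j k = c k :=
  congrArg c (if_pos h)

theorem eraseBreakpoint_of_le {c : ℕ → ℕ} {j k : ℕ} (h : j ≤ k) :
    eraseBreakpoint c j k = c (k + 1) :=
  congrArg c (if_neg h.not_gt)

theorem StrictMonoOn.eraseBreakpoint {c : ℕ → ℕ} {m : ℕ} (hc : StrictMonoOn c (Set.Iic (m + 1)))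
    (j : ℕ) : StrictMonoOn (eraseBreakpoint c j) (Set.Iic m) := by
  refine hc.comp (fun a _ b _ hab => ?_) fun k hk => ?_
  · split_ifs <;> omega
  · simp only [Set.mem_Iic] at hk ⊢
    split_ifs <;> omega

theorem sub_sub_sq_div_sub {K : Type*} [Field K] {x z : K} (y : K) (h : z - x ≠ 0) :
    z - y - (z - y) ^ 2 / (z - x) = (y - x) * (z - y) / (z - x) := by
  field_simp
  ring

theorem stmt_3_general (n m : ℕ) (c : ℕ → ℕ) (hclast : c (m + 1) = n)
    (hcmono : ∀ k ≤ m, c k < c (k + 1))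
    (j : ℕ) (hj1 : 1 ≤ j) (hjm : j ≤ m)
    (ind : ℕ → ℕ → Fin n → ℝ)
    (hind : ∀ a b (t : Fin n), ind a b t =
      if a < (t : ℕ) + 1 ∧ (t : ℕ) + 1 ≤ b then 1 else 0)
    (Rm : Matrix (Fin n) (Fin m) ℝ)
    (hRm : ∀ (t : Fin n) (k : Fin m), Rm t k =
      if (k : ℕ) + 1 < j then ind (c k) (c ((k : ℕ) + 1)) t
      else if (k : ℕ) + 1 = j then ind (c (j - 1)) (c (j + 1)) t
      else ind (c ((k : ℕ) + 1)) (c ((k : ℕ) + 2)) t)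
    (Rj : Fin n → ℝ) (hRj : Rj = ind (c j) (c (j + 1))) :
    Rj ⬝ᵥ ((1 - projMat Rm) *ᵥ Rj) =
      ((c j : ℝ) - c (j - 1)) * ((c (j + 1) : ℝ) - c j) /
        ((c (j + 1) : ℝ) - c (j - 1)) := by
  obtain rfl : ind = intervalIndicator n := funext₃ hind
  subst hRj
  have hc : StrictMonoOn c (Set.Iic (m + 1)) :=
    strictMonoOn_Iic_of_lt_succ fun k hk => hcmono k (Nat.lt_succ_iff.mp hk)
  have hcols : ∀ t k, Rm t k = intervalIndicator n (eraseBreakpoint c j k)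
      (eraseBreakpoint c j ((k : ℕ) + 1)) t := by
    intro t k
    rw [hRm, eraseBreakpoint, eraseBreakpoint]
    split_ifs <;> (try congr 2) <;> omega
  have hlast : eraseBreakpoint c j m ≤ n := (eraseBreakpoint_of_le hjm).trans_le hclast.le
  have hcn : c (j + 1) ≤ n := hclast ▸ hc.monotoneOn (by simp; omega) (by simp) (by omega)
  have h₁ : c (j - 1) < c j := hc (by simp; omega) (by simp; omega) (by omega)
  have h₂ : c j < c (j + 1) := hc (by simp; omega) (by simp; omega) (by omega)
  have hlo : eraseBreakpoint c j (j - 1) = c (j - 1) := eraseBreakpoint_of_lt (by omega)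
  have hhi : eraseBreakpoint c j (j - 1 + 1) = c (j + 1) := by
    rw [eraseBreakpoint_of_le (by omega), Nat.sub_add_cancel hj1]
  rw [sub_mulVec, one_mulVec, dotProduct_sub, intervalIndicator_dotProduct_of_le le_rfl le_rfl hcn,
    intervalIndicator_dotProduct_projMat_mulVec_of_segments (hc.eraseBreakpoint j) hlast hcols
      ⟨j - 1, by omega⟩ (hlo.trans_le h₁.le) hhi.ge, hlo, hhi]
  push_cast [h₁.le, h₂.le, h₁.le.trans h₂.le]
  exact sub_sub_sq_div_sub _ (sub_ne_zero.mpr (by exact_mod_cast (h₁.trans h₂).ne'))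

/-- With `R` the segment-indicator matrix, `R_{-j}` the matrix with columns `j`
and `j+1` merged, and `Rⱼ` the `(j+1)`-th column of `R`,
`Rⱼᵀ(I - Π_{R_{-j}})Rⱼ = (c_j - c_{j-1})(c_{j+1} - c_j)/(c_{j+1} - c_{j-1})`. -/
theorem stmt_3 (n m : ℕ) (c : ℕ → ℕ) (hc0 : c 0 = 0) (hclast : c (m + 1) = n)
    (hcmono : ∀ k ≤ m, c k < c (k + 1))
    (j : ℕ) (hj1 : 1 ≤ j) (hjm : j ≤ m)
    (ind : ℕ → ℕ → Fin n → ℝ)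
    (hind : ∀ a b (t : Fin n), ind a b t =
      if a < (t : ℕ) + 1 ∧ (t : ℕ) + 1 ≤ b then 1 else 0)
    (R : Matrix (Fin n) (Fin (m + 1)) ℝ)
    (hR : ∀ (t : Fin n) (k : Fin (m + 1)), R t k = ind (c k) (c (k + 1)) t)
    (Rm : Matrix (Fin n) (Fin m) ℝ)
    (hRm : ∀ (t : Fin n) (k : Fin m), Rm t k =
      if (k : ℕ) + 1 < j then ind (c k) (c ((k : ℕ) + 1)) t
      else if (k : ℕ) + 1 = j then ind (c (j - 1)) (c (j + 1)) t
      else ind (c ((k : ℕ) + 1)) (c ((k : ℕ) + 2)) t)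
    (Rj : Fin n → ℝ) (hRj : Rj = ind (c j) (c (j + 1))) :
    Rj ⬝ᵥ ((1 - projMat Rm) *ᵥ Rj) =
      ((c j : ℝ) - c (j - 1)) * ((c (j + 1) : ℝ) - c j) /
        ((c (j + 1) : ℝ) - c (j - 1)) :=
  stmt_3_general n m c hclast hcmono j hj1 hjm ind hind Rm hRm Rj hRj
end

section
/- Let θ, ℓ, r be integers with ℓ < θ < r, let δ := min(θ−ℓ, r−θ), and assume δ ≥ (r−ℓ)/4. Let f be a step function on (ℓ, r] equal to μ₀ for ℓ < t ≤ θ and μ₀ + d for θ < t ≤ r, with d ≠ 0. Then the CUSUM |F_{ℓ,θ,r}| of f at b = θ satisfies |F_{ℓ,θ,r}| = |d| √((θ−ℓ)(r−θ)/(r−ℓ)) ≥ |d| √(min(θ−ℓ, r−θ)/2) ≥ √(d² δ / 4). -/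
open Finset

/-- CUSUM statistic of a sequence over `(s, e]` at split point `b`. -/
noncomputable def cusum (f : ℕ → ℝ) (s b e : ℕ) : ℝ :=
  Real.sqrt (((b : ℝ) - s) * ((e : ℝ) - b) / ((e : ℝ) - s)) *
    ((∑ t ∈ Finset.Icc (s + 1) b, f t) / ((b : ℝ) - s) -
      (∑ t ∈ Finset.Icc (b + 1) e, f t) / ((e : ℝ) - b))

/-- For a single step function with jump `d ≠ 0` at a change point `θ` well within
`(ℓ, r]` (i.e. `min(θ-ℓ, r-θ) ≥ (r-ℓ)/4`), the CUSUM at `b = θ` satisfies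
`|F| = |d|√((θ-ℓ)(r-θ)/(r-ℓ)) ≥ |d|√(min(θ-ℓ,r-θ)/2) ≥ √(d²δ/4)`. -/
theorem stmt_8 (l θ r : ℕ) (hlθ : l < θ) (hθr : θ < r)
    (hsep : ((r : ℝ) - l) / 4 ≤ min ((θ : ℝ) - l) ((r : ℝ) - θ))
    (μ₀ d : ℝ) (hd : d ≠ 0) (f : ℕ → ℝ)
    (hf1 : ∀ t, l < t → t ≤ θ → f t = μ₀)
    (hf2 : ∀ t, θ < t → t ≤ r → f t = μ₀ + d) :
    |cusum f l θ r| =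
      |d| * Real.sqrt (((θ : ℝ) - l) * ((r : ℝ) - θ) / ((r : ℝ) - l)) ∧
    |d| * Real.sqrt (min ((θ : ℝ) - l) ((r : ℝ) - θ) / 2) ≤ |cusum f l θ r| ∧
    Real.sqrt (d ^ 2 * min ((θ : ℝ) - l) ((r : ℝ) - θ) / 4) ≤
      |d| * Real.sqrt (min ((θ : ℝ) - l) ((r : ℝ) - θ) / 2) := by
  have ha : (0:ℝ) < (θ:ℝ) - l := sub_pos.mpr (by exact_mod_cast hlθ)
  have hb : (0:ℝ) < (r:ℝ) - θ := sub_pos.mpr (by exact_mod_cast hθr)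
  have hc : (0:ℝ) < (r:ℝ) - l := by linarith
  have hsum1 : (∑ t ∈ Finset.Icc (l + 1) θ, f t) = ((θ:ℝ) - l) * μ₀ := by
    rw [show (∑ t ∈ Finset.Icc (l + 1) θ, f t) = ∑ _t ∈ Finset.Icc (l + 1) θ, μ₀ from
      Finset.sum_congr rfl (fun t ht => by
        rw [Finset.mem_Icc] at ht
        exact hf1 t (by omega) ht.2)]
    rw [Finset.sum_const, Nat.card_Icc]
    have h1 : θ + 1 - (l + 1) = θ - l := by omega
    rw [h1, nsmul_eq_mul, Nat.cast_sub hlθ.le]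
  have hsum2 : (∑ t ∈ Finset.Icc (θ + 1) r, f t) = ((r:ℝ) - θ) * (μ₀ + d) := by
    rw [show (∑ t ∈ Finset.Icc (θ + 1) r, f t) = ∑ _t ∈ Finset.Icc (θ + 1) r, (μ₀ + d) from
      Finset.sum_congr rfl (fun t ht => by
        rw [Finset.mem_Icc] at ht
        exact hf2 t (by omega) ht.2)]
    rw [Finset.sum_const, Nat.card_Icc]
    have h1 : r + 1 - (θ + 1) = r - θ := by omega
    rw [h1, nsmul_eq_mul, Nat.cast_sub hθr.le]
  have hcu : cusum f l θ r =
      Real.sqrt (((θ:ℝ) - l) * ((r:ℝ) - θ) / ((r:ℝ) - l)) * (-d) := by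
    rw [cusum, hsum1, hsum2]
    congr 1
    field_simp
    ring
  have hnn : (0:ℝ) ≤ ((θ:ℝ) - l) * ((r:ℝ) - θ) / ((r:ℝ) - l) :=
    div_nonneg (mul_nonneg ha.le hb.le) hc.le
  have heq : |cusum f l θ r| =
      |d| * Real.sqrt (((θ:ℝ) - l) * ((r:ℝ) - θ) / ((r:ℝ) - l)) := by
    rw [hcu, abs_mul, abs_neg, abs_of_nonneg (Real.sqrt_nonneg _), mul_comm]
  refine ⟨heq, ?_, ?_⟩
  · rw [heq]
    apply mul_le_mul_of_nonneg_left _ (abs_nonneg d)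
    apply Real.sqrt_le_sqrt
    rcases le_total ((θ:ℝ) - l) ((r:ℝ) - θ) with h | h
    · rw [min_eq_left h]
      rw [div_le_div_iff₀ (by norm_num) hc]
      nlinarith
    · rw [min_eq_right h]
      rw [div_le_div_iff₀ (by norm_num) hc]
      nlinarith
  · have hmin : (0:ℝ) ≤ min ((θ:ℝ) - l) ((r:ℝ) - θ) := le_min ha.le hb.le
    have : d ^ 2 * min ((θ:ℝ) - l) ((r:ℝ) - θ) / 4
        ≤ d ^ 2 * (min ((θ:ℝ) - l) ((r:ℝ) - θ) / 2) := by
      nlinarith [sq_nonneg d]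
    calc Real.sqrt (d ^ 2 * min ((θ:ℝ) - l) ((r:ℝ) - θ) / 4)
        ≤ Real.sqrt (d ^ 2 * (min ((θ:ℝ) - l) ((r:ℝ) - θ) / 2)) :=
          Real.sqrt_le_sqrt this
      _ = |d| * Real.sqrt (min ((θ:ℝ) - l) ((r:ℝ) - θ) / 2) := by
          rw [Real.sqrt_mul (sq_nonneg d), Real.sqrt_sq_eq_abs]
end

section
/- Let 0 ≤ ℓ < θ ≤ b < r ≤ n be integers and let f be a two-step function on (ℓ, r]: f_t = μ₀ for ℓ < t ≤ θ and f_t = μ₀ + d for θ < t ≤ r. Then the CUSUM F_{ℓ,b,r} of f equals −√((b−ℓ)(r−b)/(r−ℓ)) · (θ−ℓ)d/(b−ℓ), and in particular |F_{ℓ,b,r}| ≤ √(d² · min(θ−ℓ, r−θ)). -/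
open Finset

/-!
Both window means of a two-step function are explicit: the right one is `μ₀ + d`, the left one
is `μ₀ + (b - θ) d / (b - ℓ)`, so their difference is `-(θ - ℓ) d / (b - ℓ)`. Squaring the
resulting CUSUM leaves `d²` times `(r - b)(θ - ℓ)² / ((r - ℓ)(b - ℓ))`, and this weight is at most
both `θ - ℓ` and `r - θ` because each of its factors `(r - b)/(r - ℓ)`, `(θ - ℓ)/(b - ℓ)`,
`(θ - ℓ)/(r - ℓ)` is at most one.
-/

lemma sum_Ioc_eq_mul_of_forall_eq {f : ℕ → ℝ} {a b : ℕ} {c : ℝ} (hab : a ≤ b)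
    (hf : ∀ t ∈ Ioc a b, f t = c) : ∑ t ∈ Ioc a b, f t = ((b : ℝ) - a) * c := by
  rw [sum_congr rfl hf, sum_const, Nat.card_Ioc, nsmul_eq_mul, Nat.cast_sub hab]

section TwoStep

variable {l θ b r : ℕ} {μ₀ d : ℝ} {f : ℕ → ℝ}

lemma sum_Icc_twoStep_left (hlθ : l ≤ θ) (hθb : θ ≤ b) (hbr : b ≤ r)
    (hf1 : ∀ t, l < t → t ≤ θ → f t = μ₀) (hf2 : ∀ t, θ < t → t ≤ r → f t = μ₀ + d) :
    ∑ t ∈ Icc (l + 1) b, f t = ((θ : ℝ) - l) * μ₀ + ((b : ℝ) - θ) * (μ₀ + d) := by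
  rw [Icc_add_one_left_eq_Ioc, ← sum_Ioc_consecutive f hlθ hθb,
    sum_Ioc_eq_mul_of_forall_eq hlθ fun t ht ↦ hf1 t (mem_Ioc.1 ht).1 (mem_Ioc.1 ht).2,
    sum_Ioc_eq_mul_of_forall_eq hθb fun t ht ↦ hf2 t (mem_Ioc.1 ht).1 ((mem_Ioc.1 ht).2.trans hbr)]

lemma sum_Icc_twoStep_right (hθb : θ ≤ b) (hbr : b ≤ r)
    (hf2 : ∀ t, θ < t → t ≤ r → f t = μ₀ + d) :
    ∑ t ∈ Icc (b + 1) r, f t = ((r : ℝ) - b) * (μ₀ + d) := by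
  rw [Icc_add_one_left_eq_Ioc, sum_Ioc_eq_mul_of_forall_eq hbr fun t ht ↦
    hf2 t (hθb.trans_lt (mem_Ioc.1 ht).1) (mem_Ioc.1 ht).2]

lemma cusum_twoStep (hlθ : l < θ) (hθb : θ ≤ b) (hbr : b < r)
    (hf1 : ∀ t, l < t → t ≤ θ → f t = μ₀) (hf2 : ∀ t, θ < t → t ≤ r → f t = μ₀ + d) :
    cusum f l b r =
      -(Real.sqrt (((b : ℝ) - l) * ((r : ℝ) - b) / ((r : ℝ) - l)) *
        (((θ : ℝ) - l) * d / ((b : ℝ) - l))) := by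
  have hbl : (b : ℝ) - l ≠ 0 := sub_ne_zero.2 (by exact_mod_cast (hlθ.trans_le hθb).ne')
  have hrb : (r : ℝ) - b ≠ 0 := sub_ne_zero.2 (by exact_mod_cast hbr.ne')
  rw [cusum, sum_Icc_twoStep_left hlθ.le hθb hbr.le hf1 hf2, sum_Icc_twoStep_right hθb hbr.le hf2,
    neg_mul_eq_mul_neg]
  congr 1
  field_simp
  ring

end TwoStep

lemma twoStep_weight_le_min {l θ b r : ℝ} (hlθ : l < θ) (hθb : θ ≤ b) (hbr : b < r) :
    (r - b) * (θ - l) ^ 2 / ((r - l) * (b - l)) ≤ min (θ - l) (r - θ) := by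
  have hθl : 0 < θ - l := by linarith
  rw [le_min_iff, div_le_iff₀ (by nlinarith), div_le_iff₀ (by nlinarith)]
  constructor
  · nlinarith [mul_le_mul (by linarith : r - b ≤ r - l) (by linarith : θ - l ≤ b - l) hθl.le
      (by linarith : 0 ≤ r - l)]
  · nlinarith [mul_le_mul (by linarith : r - b ≤ r - θ)
      (mul_le_mul (by linarith : θ - l ≤ r - l) (by linarith : θ - l ≤ b - l) hθl.le
        (by linarith : 0 ≤ r - l))
      (mul_nonneg hθl.le hθl.le) (by linarith : 0 ≤ r - θ)]

lemma sq_twoStep_cusum_le {l θ b r : ℝ} (d : ℝ) (hlθ : l < θ) (hθb : θ ≤ b) (hbr : b < r) :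
    (Real.sqrt ((b - l) * (r - b) / (r - l)) * ((θ - l) * d / (b - l))) ^ 2 ≤
      d ^ 2 * min (θ - l) (r - θ) := by
  have hbl : b - l ≠ 0 := by linarith
  rw [mul_pow, Real.sq_sqrt (div_nonneg (by nlinarith) (by linarith))]
  calc (b - l) * (r - b) / (r - l) * ((θ - l) * d / (b - l)) ^ 2
      = d ^ 2 * ((r - b) * (θ - l) ^ 2 / ((r - l) * (b - l))) := by field_simp
    _ ≤ d ^ 2 * min (θ - l) (r - θ) :=
      mul_le_mul_of_nonneg_left (twoStep_weight_le_min hlθ hθb hbr) (sq_nonneg d)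

theorem stmt_12_general (l θ b r : ℕ) (hlθ : l < θ) (hθb : θ ≤ b) (hbr : b < r)
    (μ₀ d : ℝ) (f : ℕ → ℝ)
    (hf1 : ∀ t, l < t → t ≤ θ → f t = μ₀)
    (hf2 : ∀ t, θ < t → t ≤ r → f t = μ₀ + d) :
    cusum f l b r =
      -(Real.sqrt (((b : ℝ) - l) * ((r : ℝ) - b) / ((r : ℝ) - l)) *
        (((θ : ℝ) - l) * d / ((b : ℝ) - l))) ∧
    |cusum f l b r| ≤ Real.sqrt (d ^ 2 * min ((θ : ℝ) - l) ((r : ℝ) - θ)) := by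
  have hcusum := cusum_twoStep hlθ hθb hbr hf1 hf2
  refine ⟨hcusum, ?_⟩
  rw [← Real.sqrt_sq_eq_abs, hcusum, neg_sq]
  exact Real.sqrt_le_sqrt (sq_twoStep_cusum_le d (by exact_mod_cast hlθ) (by exact_mod_cast hθb)
    (by exact_mod_cast hbr))

/-- For a two-step function on `(ℓ, r]` with jump `d` at `θ` and split `b ≥ θ`,
the CUSUM equals `-√((b-ℓ)(r-b)/(r-ℓ))·(θ-ℓ)d/(b-ℓ)`, and in particular is
bounded in modulus by `√(d²·min(θ-ℓ, r-θ))`. -/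
theorem stmt_12 (n l θ b r : ℕ) (hlθ : l < θ) (hθb : θ ≤ b) (hbr : b < r)
    (hrn : r ≤ n) (μ₀ d : ℝ) (f : ℕ → ℝ)
    (hf1 : ∀ t, l < t → t ≤ θ → f t = μ₀)
    (hf2 : ∀ t, θ < t → t ≤ r → f t = μ₀ + d) :
    cusum f l b r =
      -(Real.sqrt (((b : ℝ) - l) * ((r : ℝ) - b) / ((r : ℝ) - l)) *
        (((θ : ℝ) - l) * d / ((b : ℝ) - l))) ∧
    |cusum f l b r| ≤ Real.sqrt (d ^ 2 * min ((θ : ℝ) - l) ((r : ℝ) - θ)) :=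
  stmt_12_general l θ b r hlθ hθb hbr μ₀ d f hf1 hf2
end

section
/- For integers i < q < Q and reals as in the double-CUSUM setup, if Y_r = γ L for i < r ≤ q and Y_r = 0 for q < r ≤ Q with γ, L > 0, then for every m with q < m < Q, 𝕐_{i,q,Q} − 𝕐_{i,m,Q} = γ L ( √((q−i)(Q−q)/(Q−i)) − √((m−i)(Q−m)/(Q−i)) · (q−i)/(m−i) ) ≥ 0, i.e. m ↦ 𝕐_{i,m,Q} is maximized at m = q among m ≥ q. -/
open Finset

/-- Double CUSUM statistic of the sequence `Y` over `(i, Q]` at split `m`. -/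
noncomputable def dblCUSUM (Y : ℕ → ℝ) (i m Q : ℕ) : ℝ :=
  Real.sqrt (((m : ℝ) - i) * ((Q : ℝ) - m) / ((Q : ℝ) - i)) *
    ((∑ r ∈ Finset.Icc (i + 1) m, Y r) / ((m : ℝ) - i) -
      (∑ r ∈ Finset.Icc (m + 1) Q, Y r) / ((Q : ℝ) - m))

/-- If `Y_r = γL` for `i < r ≤ q` and `Y_r = 0` for `q < r ≤ Q`, then for `q < m < Q`,
`𝕐_{i,q,Q} - 𝕐_{i,m,Q} = γL(√((q-i)(Q-q)/(Q-i)) - √((m-i)(Q-m)/(Q-i))·(q-i)/(m-i)) ≥ 0`. -/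
theorem stmt_17 (i q Q : ℕ) (hiq : i < q) (hqQ : q < Q)
    (γ L : ℝ) (hγ : 0 < γ) (hL : 0 < L) (Y : ℕ → ℝ)
    (hY1 : ∀ r, i < r → r ≤ q → Y r = γ * L)
    (hY2 : ∀ r, q < r → r ≤ Q → Y r = 0) :
    ∀ m, q < m → m < Q →
      dblCUSUM Y i q Q - dblCUSUM Y i m Q =
        γ * L * (Real.sqrt (((q : ℝ) - i) * ((Q : ℝ) - q) / ((Q : ℝ) - i)) -
          Real.sqrt (((m : ℝ) - i) * ((Q : ℝ) - m) / ((Q : ℝ) - i)) *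
            (((q : ℝ) - i) / ((m : ℝ) - i))) ∧
      dblCUSUM Y i m Q ≤ dblCUSUM Y i q Q := by
  intro m hqm hmQ
  have hsum1 : ∀ n, i < n → n ≤ q → (∑ r ∈ Finset.Icc (i + 1) n, Y r) = ((n : ℝ) - i) * (γ * L) := by
    intro n hin hnq
    rw [Finset.sum_congr rfl (fun r hr => by
      simp only [Finset.mem_Icc] at hr
      exact hY1 r (by omega) (by omega))]
    rw [Finset.sum_const, Nat.card_Icc]
    have h1 : (n + 1 - (i + 1)) = n - i := by omega
    rw [h1]
    rw [nsmul_eq_mul]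
    push_cast [Nat.cast_sub hin.le]
    ring
  have hsum0 : ∀ n, q ≤ n → (∑ r ∈ Finset.Icc (n + 1) Q, Y r) = 0 := by
    intro n hn
    apply Finset.sum_eq_zero
    intro r hr
    simp only [Finset.mem_Icc] at hr
    exact hY2 r (by omega) hr.2
  have hsumm : (∑ r ∈ Finset.Icc (i + 1) m, Y r) = ((q : ℝ) - i) * (γ * L) := by
    have hsplit : Finset.Icc (i + 1) m = Finset.Icc (i + 1) q ∪ Finset.Icc (q + 1) m := by
      ext r; simp only [Finset.mem_union, Finset.mem_Icc]; omega
    rw [hsplit, Finset.sum_union (by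
      rw [Finset.disjoint_left]; intro r hr hr'
      simp only [Finset.mem_Icc] at hr hr'; omega)]
    rw [hsum1 q hiq le_rfl, Finset.sum_eq_zero (fun r hr => by
      simp only [Finset.mem_Icc] at hr; exact hY2 r (by omega) (by omega))]
    ring
  have hqi : (0:ℝ) < (q:ℝ) - i := by
    have : (i:ℝ) < q := by exact_mod_cast hiq
    linarith
  have hmi : (0:ℝ) < (m:ℝ) - i := by
    have : (i:ℝ) < m := by exact_mod_cast (hiq.trans hqm)
    linarith
  have hQm : (0:ℝ) < (Q:ℝ) - m := by
    have : (m:ℝ) < Q := by exact_mod_cast hmQ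
    linarith
  have hQq : (0:ℝ) < (Q:ℝ) - q := by
    have : (q:ℝ) < Q := by exact_mod_cast hqQ
    linarith
  have hQi : (0:ℝ) < (Q:ℝ) - i := by linarith
  have hdq : dblCUSUM Y i q Q =
      γ * L * Real.sqrt (((q : ℝ) - i) * ((Q : ℝ) - q) / ((Q : ℝ) - i)) := by
    unfold dblCUSUM
    rw [hsum1 q hiq le_rfl, hsum0 q le_rfl]
    rw [zero_div, sub_zero, mul_div_assoc, mul_div_cancel_left₀ _ hqi.ne']
    ring
  have hdm : dblCUSUM Y i m Q =
      γ * L * (Real.sqrt (((m : ℝ) - i) * ((Q : ℝ) - m) / ((Q : ℝ) - i)) *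
        (((q : ℝ) - i) / ((m : ℝ) - i))) := by
    unfold dblCUSUM
    rw [hsumm, hsum0 m hqm.le]
    rw [zero_div, sub_zero]
    ring
  refine ⟨by rw [hdq, hdm]; ring, ?_⟩
  rw [hdq, hdm]
  have key : Real.sqrt (((m : ℝ) - i) * ((Q : ℝ) - m) / ((Q : ℝ) - i)) *
      (((q : ℝ) - i) / ((m : ℝ) - i)) ≤
      Real.sqrt (((q : ℝ) - i) * ((Q : ℝ) - q) / ((Q : ℝ) - i)) := by
    have hk : (0:ℝ) ≤ ((q : ℝ) - i) / ((m : ℝ) - i) := by positivity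
    rw [← Real.sqrt_sq hk, ← Real.sqrt_mul (by positivity)]
    apply Real.sqrt_le_sqrt
    rw [div_pow, div_mul_div_comm, div_le_div_iff₀ (by positivity) hQi]
    have hm : (q:ℝ) ≤ m := by exact_mod_cast hqm.le
    have hm2 : ((Q:ℝ) - m) * ((q:ℝ) - i) ≤ ((Q:ℝ) - q) * ((m:ℝ) - i) := by
      nlinarith [mul_nonneg (sub_nonneg.2 hm) hQi.le]
    nlinarith [mul_le_mul_of_nonneg_right hm2
      (by positivity : (0:ℝ) ≤ ((q:ℝ) - i) * (((m:ℝ) - i) * ((Q:ℝ) - i)))]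
  exact mul_le_mul_of_nonneg_left key (by positivity)
end

section
/- Let θ, ℓ, r be integers with ℓ < θ < r and min(θ−ℓ, r−θ) ≥ (r−ℓ)/4 (well-separated change point), and let f be the step function equal to 0 on (ℓ,θ] and d on (θ,r]. Then for any integer b with |b − θ| ≤ min(θ−ℓ, r−θ)/2, the CUSUM of f satisfies |F_{ℓ,θ,r} − F_{ℓ,b,r}| ≥ (2/(3√6)) · |d| · |b − θ| / √(min(θ−ℓ, r−θ)). -/
/-!
For the step `f = d · 1_{(θ, r]}` the CUSUM has a closed form. With `P = θ - ℓ`, `Q = r - θ` and a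
split `b = θ - H` it is `-d √y` with `y = Q²(P - H)/((Q + H)(P + Q))`, and at `b = θ` it is `-d √x`
with `x = PQ/(P + Q)`; splits to the right of `θ` are the mirror image. Since
`x - y = QH/(Q + H) ≥ 2H/3` and `x ≤ min P Q`, we get
`√x - √y ≥ (x - y)/(2√x) ≥ H/(3√(min P Q))`, and `1/3 ≥ 2/(3√6)`.
-/

open Finset

lemma div_two_sqrt_le_sqrt_sub_sqrt {x y : ℝ} (hy : 0 ≤ y) (hyx : y ≤ x) :
    (x - y) / (2 * √x) ≤ √x - √y := by
  have hsqrt : √y ≤ √x := Real.sqrt_le_sqrt hyx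
  rcases (Real.sqrt_nonneg x).lt_or_eq with hx | hx
  · have hsq : x - y = (√x - √y) * (√x + √y) := by
      linear_combination (Real.mul_self_sqrt (hy.trans hyx)).symm - (Real.mul_self_sqrt hy).symm
    rw [div_le_iff₀ (by positivity), hsq]
    gcongr
    linarith
  · rw [← hx] at hsqrt ⊢
    simpa using hsqrt

lemma mul_div_add_le_min {P Q : ℝ} (hP : 0 < P) (hQ : 0 < Q) : P * Q / (P + Q) ≤ min P Q := by
  rw [div_le_iff₀ (by positivity)]
  rcases le_total P Q with h | h
  · rw [min_eq_left h]; nlinarith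
  · rw [min_eq_right h]; nlinarith

lemma sum_Icc_succ_step {f : ℕ → ℝ} {a θ c : ℕ} {d : ℝ} (haθ : a ≤ θ) (hθc : θ ≤ c)
    (hf0 : ∀ t, a < t → t ≤ θ → f t = 0) (hfd : ∀ t, θ < t → t ≤ c → f t = d) :
    ∑ t ∈ Icc (a + 1) c, f t = ((c : ℝ) - θ) * d := by
  rw [Icc_add_one_left_eq_Ioc, ← sum_Ioc_consecutive f haθ hθc,
    sum_eq_zero fun t ht => hf0 t (mem_Ioc.1 ht).1 (mem_Ioc.1 ht).2,
    sum_congr rfl fun t ht => hfd t (mem_Ioc.1 ht).1 (mem_Ioc.1 ht).2,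
    sum_const, Nat.card_Ioc, nsmul_eq_mul, Nat.cast_sub hθc, zero_add]

/-- `-d * unitStepCusum P Q H` is the CUSUM of the step that is `0` on `P` points and then `d`
on `Q` points, split `H` points before the change; splits after it are the mirror image. -/
noncomputable def unitStepCusum (P Q H : ℝ) : ℝ :=
  Q / (Q + H) * √((P - H) * (Q + H) / (P + Q))

section StepFunction

variable {f : ℕ → ℝ} {l θ r b : ℕ} {d : ℝ}

lemma cusum_step_of_le (hlb : l ≤ b) (hbθ : b ≤ θ) (hθr : θ ≤ r)
    (hf1 : ∀ t, l < t → t ≤ θ → f t = 0) (hf2 : ∀ t, θ < t → t ≤ r → f t = d) :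
    cusum f l b r = -(d * unitStepCusum (θ - l) (r - θ) (θ - b)) := by
  have hleft : ∑ t ∈ Icc (l + 1) b, f t = 0 := by
    simpa using sum_Icc_succ_step (d := 0) hlb le_rfl (fun t h1 h2 => hf1 t h1 (h2.trans hbθ))
      (fun t h1 h2 => by omega)
  have hright : ∑ t ∈ Icc (b + 1) r, f t = ((r : ℝ) - θ) * d :=
    sum_Icc_succ_step hbθ hθr (fun t h1 h2 => hf1 t (by omega) h2) hf2
  rw [cusum, unitStepCusum, hleft, hright,
    show ((θ : ℝ) - l - (θ - b)) * (r - θ + (θ - b)) / (θ - l + (r - θ)) = (b - l) * (r - b) / (r - l)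
      by ring,
    show (r : ℝ) - θ + (θ - b) = r - b by ring]
  ring

lemma cusum_step_of_ge (hlb : l < b) (hlθ : l ≤ θ) (hθb : θ ≤ b) (hbr : b < r)
    (hf1 : ∀ t, l < t → t ≤ θ → f t = 0) (hf2 : ∀ t, θ < t → t ≤ r → f t = d) :
    cusum f l b r = -(d * unitStepCusum (r - θ) (θ - l) (b - θ)) := by
  have hleft : ∑ t ∈ Icc (l + 1) b, f t = ((b : ℝ) - θ) * d :=
    sum_Icc_succ_step hlθ hθb hf1 (fun t h1 h2 => hf2 t h1 (by omega))
  have hright : ∑ t ∈ Icc (b + 1) r, f t = ((r : ℝ) - b) * d :=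
    sum_Icc_succ_step le_rfl hbr.le (fun t h1 h2 => by omega) (fun t h1 h2 => hf2 t (by omega) h2)
  have hbl : (b : ℝ) - l ≠ 0 := sub_ne_zero.2 (by exact_mod_cast hlb.ne')
  have hrb : (r : ℝ) - b ≠ 0 := sub_ne_zero.2 (by exact_mod_cast hbr.ne')
  rw [cusum, unitStepCusum, hleft, hright,
    show ((r : ℝ) - θ - (b - θ)) * (θ - l + (b - θ)) / (r - θ + (θ - l)) = (b - l) * (r - b) / (r - l)
      by ring,
    show (θ : ℝ) - l + (b - θ) = b - l by ring]
  field_simp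
  ring

end StepFunction

lemma unitStepCusum_sub_ge {P Q H : ℝ} (hP : 0 < P) (hQ : 0 < Q) (hH : 0 ≤ H)
    (hHm : H ≤ min P Q / 2) :
    H / (3 * √(min P Q)) ≤ unitStepCusum P Q 0 - unitStepCusum P Q H := by
  have hHP : H ≤ P / 2 := hHm.trans (by gcongr; exact min_le_left P Q)
  have hHQ : H ≤ Q / 2 := hHm.trans (by gcongr; exact min_le_right P Q)
  set x := P * Q / (P + Q)
  set y := Q ^ 2 * (P - H) / ((Q + H) * (P + Q)) with hy_def
  have hy : 0 ≤ y := div_nonneg (mul_nonneg (sq_nonneg Q) (by linarith)) (by positivity)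
  have hx : unitStepCusum P Q 0 = √x := by
    rw [unitStepCusum, add_zero, div_self hQ.ne', one_mul, sub_zero]
  have hyH : unitStepCusum P Q H = √y := by
    rw [unitStepCusum, show y = (Q / (Q + H)) ^ 2 * ((P - H) * (Q + H) / (P + Q)) by
        rw [hy_def]; field_simp,
      Real.sqrt_mul (sq_nonneg _), Real.sqrt_sq (by positivity)]
  have hxy : x - y = Q * H / (Q + H) := by
    simp only [x, y]
    field_simp
    ring
  have hjump : 2 / 3 * H ≤ Q * H / (Q + H) := by
    rw [le_div_iff₀ (by positivity)]
    nlinarith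
  calc H / (3 * √(min P Q)) = 2 / 3 * H / (2 * √(min P Q)) := by ring
    _ ≤ Q * H / (Q + H) / (2 * √x) := by
      gcongr
      exact mul_div_add_le_min hP hQ
    _ = (x - y) / (2 * √x) := by rw [hxy]
    _ ≤ √x - √y := div_two_sqrt_le_sqrt_sub_sqrt hy (by linarith [hxy ▸ hjump])
    _ = unitStepCusum P Q 0 - unitStepCusum P Q H := by rw [hx, hyH]

lemma le_abs_unitStepCusum_sub {P Q H : ℝ} (d : ℝ) (hP : 0 < P) (hQ : 0 < Q) (hH : 0 ≤ H)
    (hHm : H ≤ min P Q / 2) :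
    2 / (3 * √6) * |d| * H / √(min P Q) ≤
      |-(d * unitStepCusum P Q 0) - -(d * unitStepCusum P Q H)| := by
  have h6 : 2 / √6 ≤ 1 := (div_le_one (by positivity)).2 (Real.le_sqrt_of_sq_le (by norm_num))
  calc 2 / (3 * √6) * |d| * H / √(min P Q) = 2 / √6 * (|d| * (H / (3 * √(min P Q)))) := by ring
    _ ≤ |d| * (H / (3 * √(min P Q))) := mul_le_of_le_one_left (by positivity) h6
    _ ≤ |d| * |unitStepCusum P Q 0 - unitStepCusum P Q H| := by
      gcongr
      exact (unitStepCusum_sub_ge hP hQ hH hHm).trans (le_abs_self _)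
    _ = |-(d * unitStepCusum P Q 0) - -(d * unitStepCusum P Q H)| := by
      rw [← abs_mul, ← abs_neg]
      congr 1
      ring

theorem stmt_18_general (l θ r : ℕ) (hlθ : l < θ) (hθr : θ < r)
    (d : ℝ) (f : ℕ → ℝ)
    (hf1 : ∀ t, l < t → t ≤ θ → f t = 0)
    (hf2 : ∀ t, θ < t → t ≤ r → f t = d)
    (b : ℕ) (hlb : l < b) (hbr : b < r)
    (hb : |(b : ℝ) - θ| ≤ min ((θ : ℝ) - l) ((r : ℝ) - θ) / 2) :
    2 / (3 * Real.sqrt 6) * |d| * |(b : ℝ) - θ| /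
        Real.sqrt (min ((θ : ℝ) - l) ((r : ℝ) - θ)) ≤
      |cusum f l θ r - cusum f l b r| := by
  have hP : (0 : ℝ) < θ - l := sub_pos.2 (by exact_mod_cast hlθ)
  have hQ : (0 : ℝ) < r - θ := sub_pos.2 (by exact_mod_cast hθr)
  rcases le_total b θ with hbθ | hθb
  · have hH : |(b : ℝ) - θ| = θ - b := by
      rw [abs_sub_comm, abs_of_nonneg (sub_nonneg.2 (by exact_mod_cast hbθ))]
    rw [cusum_step_of_le hlθ.le le_rfl hθr.le hf1 hf2, cusum_step_of_le hlb.le hbθ hθr.le hf1 hf2,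
      sub_self, hH]
    exact le_abs_unitStepCusum_sub d hP hQ (hH ▸ abs_nonneg _) (hH ▸ hb)
  · have hH : |(b : ℝ) - θ| = b - θ := abs_of_nonneg (sub_nonneg.2 (by exact_mod_cast hθb))
    rw [cusum_step_of_ge hlθ hlθ.le le_rfl hθr hf1 hf2, cusum_step_of_ge hlb hlθ.le hθb hbr hf1 hf2,
      sub_self, hH, min_comm]
    exact le_abs_unitStepCusum_sub d hQ hP (hH ▸ abs_nonneg _) (hH ▸ min_comm (θ - l : ℝ) _ ▸ hb)

/-- For a well-separated single change point `θ` in `(ℓ, r)` with jump size `d`,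
and any split `b` with `|b - θ| ≤ min(θ-ℓ, r-θ)/2`, the CUSUMs satisfy
`|F_{ℓ,θ,r} - F_{ℓ,b,r}| ≥ (2/(3√6))·|d|·|b-θ|/√(min(θ-ℓ, r-θ))`. -/
theorem stmt_18 (l θ r : ℕ) (hlθ : l < θ) (hθr : θ < r)
    (hsep : ((r : ℝ) - l) / 4 ≤ min ((θ : ℝ) - l) ((r : ℝ) - θ))
    (d : ℝ) (f : ℕ → ℝ)
    (hf1 : ∀ t, l < t → t ≤ θ → f t = 0)
    (hf2 : ∀ t, θ < t → t ≤ r → f t = d)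
    (b : ℕ) (hlb : l < b) (hbr : b < r)
    (hb : |(b : ℝ) - θ| ≤ min ((θ : ℝ) - l) ((r : ℝ) - θ) / 2) :
    2 / (3 * Real.sqrt 6) * |d| * |(b : ℝ) - θ| /
        Real.sqrt (min ((θ : ℝ) - l) ((r : ℝ) - θ)) ≤
      |cusum f l θ r - cusum f l b r| :=
  stmt_18_general l θ r hlθ hθr d f hf1 hf2 b hlb hbr hb
end
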